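/- (Incompressible conservation laws.) Let (u, p) be a smooth (C^∞) solution of the steady incompressible Euler equations on U with u₁ > 0 and |u| ≥ δ for some constant δ > 0, and suppose the Bernoulli function B is equal to a constant B₀ on U. Fix a reference pressure p̲ ∈ ℝ with p̲ < B₀. Define K₁ = G^{-1/2}, K₂ = β₂K₁, K₃ = β₃K₁, I(q) = exp(∫_{p̲}^q 1/(2(B₀ − t)) dt), Q(q) = ∫_{p̲}^q I(t)^{-2}/(2(B₀ − t)) dt (well-defined since B₀ − t > 0 between p̲ and p(x), because p(x) = B₀ − |u(x)|²/2 < B₀), and A_i = K_i/I(p) for i = 1,2,3. Then on U: ∂₁A₁ + ∂₂A₂ + ∂₃A₃ = 0; ∂₁(A₁²) + ∂₂(A₁A₂) + ∂₃(A₁A₃) + ∂₁(Q(p)) = 0; ∂₁(A₁A₂) + ∂₂(A₂²) + ∂₃(A₂A₃) + ∂₂(Q(p)) = 0; and ∂₁(A₁A₃) + ∂₂(A₂A₃) + ∂₃(A₃²) + ∂₃(Q(p)) = 0. -/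

import Mathlib

/-- Partial derivative in direction `i` of a scalar function on `ℝ³`. -/
noncomputable def pd (i : Fin 3) (f : (Fin 3 → ℝ) → ℝ) (x : Fin 3 → ℝ) : ℝ :=
  fderiv ℝ f x (Pi.single i 1)

/-- `I(q) = exp(∫_{p̲}^q 1/(2(B₀ − t)) dt)` for the incompressible case. -/
noncomputable def IfunInc (B₀ pl q : ℝ) : ℝ :=
  Real.exp (∫ t in pl..q, 1 / (2 * (B₀ - t)))

/-- `Q(q) = ∫_{p̲}^q I(t)⁻²/(2(B₀ − t)) dt` for the incompressible case. -/
noncomputable def QfunInc (B₀ pl q : ℝ) : ℝ :=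
  ∫ t in pl..q, (IfunInc B₀ pl t ^ 2)⁻¹ / (2 * (B₀ - t))

lemma integral_half_recip (B₀ pl q : ℝ) (hpl : pl < B₀) (hq : q < B₀) :
    (∫ t in pl..q, 1 / (2 * (B₀ - t)))
      = (1/2) * Real.log (B₀ - pl) - (1/2) * Real.log (B₀ - q) := by
  have hne : ∀ t ∈ Set.uIcc pl q, B₀ - t ≠ 0 := by
    intro t ht
    have : t ≤ max pl q := ht.2
    have : t < B₀ := lt_of_le_of_lt this (max_lt hpl hq)
    linarith
  have hderiv : ∀ t ∈ Set.uIcc pl q,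
      HasDerivAt (fun s => -(1/2) * Real.log (B₀ - s)) (1 / (2 * (B₀ - t))) t := by
    intro t ht
    have h1 : HasDerivAt (fun s : ℝ => B₀ - s) (-1) t := (hasDerivAt_id t).const_sub B₀
    have h2 := (Real.hasDerivAt_log (hne t ht)).comp t h1
    have h3 := h2.const_mul (-(1/2) : ℝ)
    convert h3 using 1
    all_goals first | rfl | field_simp
  have hint : IntervalIntegrable (fun t => 1 / (2 * (B₀ - t))) MeasureTheory.volume pl q := by
    apply ContinuousOn.intervalIntegrable
    apply ContinuousOn.div continuousOn_const
    · exact (continuousOn_const.mul ((continuousOn_const.sub continuousOn_id))).congr (by intro t ht; rfl)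
    · intro t ht
      have := hne t ht
      intro h; apply this; linarith [h]
  have := intervalIntegral.integral_eq_sub_of_hasDerivAt hderiv hint
  rw [this]; ring

lemma IfunInc_eq (B₀ pl q : ℝ) (hpl : pl < B₀) (hq : q < B₀) :
    IfunInc B₀ pl q = Real.sqrt (B₀ - pl) / Real.sqrt (B₀ - q) := by
  unfold IfunInc
  rw [integral_half_recip B₀ pl q hpl hq, Real.exp_sub,
    Real.sqrt_eq_rpow, Real.sqrt_eq_rpow,
    Real.rpow_def_of_pos (by linarith), Real.rpow_def_of_pos (by linarith)]
  ring_nf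

lemma IfunInc_sq (B₀ pl q : ℝ) (hpl : pl < B₀) (hq : q < B₀) :
    IfunInc B₀ pl q ^ 2 = (B₀ - pl) / (B₀ - q) := by
  rw [IfunInc_eq B₀ pl q hpl hq, div_pow, Real.sq_sqrt (by linarith), Real.sq_sqrt (by linarith)]

lemma QfunInc_eq (B₀ pl q : ℝ) (hpl : pl < B₀) (hq : q < B₀) :
    QfunInc B₀ pl q = (q - pl) / (2 * (B₀ - pl)) := by
  unfold QfunInc
  rw [intervalIntegral.integral_congr (g := fun _ => 1 / (2 * (B₀ - pl)))]
  · rw [intervalIntegral.integral_const]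
    simp only [smul_eq_mul]
    field_simp
  · intro t ht
    have htB : t < B₀ := lt_of_le_of_lt ht.2 (max_lt hpl hq)
    simp only
    rw [IfunInc_sq B₀ pl t hpl htB]
    rw [inv_div]
    have h1 : B₀ - t ≠ 0 := by linarith
    have h2 : B₀ - pl ≠ 0 := by linarith
    field_simp
-- pd lemmas
lemma pd_congr {f g : (Fin 3 → ℝ) → ℝ} {x : Fin 3 → ℝ} {i : Fin 3}
    (h : f =ᶠ[nhds x] g) : pd i f x = pd i g x := by
  unfold pd; rw [h.fderiv_eq]

lemma pd_mul {f g : (Fin 3 → ℝ) → ℝ} {x : Fin 3 → ℝ} (i : Fin 3)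
    (hf : DifferentiableAt ℝ f x) (hg : DifferentiableAt ℝ g x) :
    pd i (fun y => f y * g y) x = f x * pd i g x + g x * pd i f x := by
  unfold pd; rw [fderiv_fun_mul hf hg]; simp

lemma pd_div_const {f : (Fin 3 → ℝ) → ℝ} {x : Fin 3 → ℝ} (i : Fin 3) (c : ℝ)
    (hf : DifferentiableAt ℝ f x) :
    pd i (fun y => f y / c) x = pd i f x / c := by
  unfold pd
  simp only [div_eq_mul_inv]
  rw [fderiv_mul_const hf]
  simp [mul_comm]

lemma pd_sub_const (f : (Fin 3 → ℝ) → ℝ) (x : Fin 3 → ℝ) (i : Fin 3) (c : ℝ) :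
    pd i (fun y => f y - c) x = pd i f x := by
  unfold pd; rw [fderiv_sub_const]

/-- incompressible conservation laws: the system (5.15) for
`A_i = K_i/I(p)`, `K₁ = G^(-1/2)`, `K₂ = β₂K₁`, `K₃ = β₃K₁`, for a smooth
incompressible Euler flow with constant Bernoulli function `B₀`, `u₁ > 0`
and speed bounded below by `δ > 0`. -/
theorem incompressible_conservation_laws
    (U : Set (Fin 3 → ℝ)) (hU : IsOpen U)
    (u : Fin 3 → (Fin 3 → ℝ) → ℝ) (p : (Fin 3 → ℝ) → ℝ)
    (hu : ∀ i, ContDiffOn ℝ (⊤ : ℕ∞) (u i) U) (hp : ContDiffOn ℝ (⊤ : ℕ∞) p U)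
    (hu1pos : ∀ x ∈ U, 0 < u 0 x)
    (δ : ℝ) (hδ : 0 < δ)
    (hspeed : ∀ x ∈ U, δ ≤ Real.sqrt (u 0 x ^ 2 + u 1 x ^ 2 + u 2 x ^ 2))
    (hdiv : ∀ x ∈ U, pd 0 (u 0) x + pd 1 (u 1) x + pd 2 (u 2) x = 0)
    (hmom : ∀ i : Fin 3, ∀ x ∈ U,
      u 0 x * pd 0 (u i) x + u 1 x * pd 1 (u i) x + u 2 x * pd 2 (u i) x
        + pd i p x = 0)
    (B₀ : ℝ)
    (hBconst : ∀ x ∈ U, (u 0 x ^ 2 + u 1 x ^ 2 + u 2 x ^ 2) / 2 + p x = B₀)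
    (pl : ℝ) (hpl : pl < B₀)
    (β₂ β₃ G A₁ A₂ A₃ : (Fin 3 → ℝ) → ℝ)
    (hβ₂ : β₂ = fun y => u 1 y / u 0 y) (hβ₃ : β₃ = fun y => u 2 y / u 0 y)
    (hG : G = fun y => 1 + β₂ y ^ 2 + β₃ y ^ 2)
    (hA₁ : A₁ = fun y => (Real.sqrt (G y))⁻¹ / IfunInc B₀ pl (p y))
    (hA₂ : A₂ = fun y => β₂ y * (Real.sqrt (G y))⁻¹ / IfunInc B₀ pl (p y))
    (hA₃ : A₃ = fun y => β₃ y * (Real.sqrt (G y))⁻¹ / IfunInc B₀ pl (p y)) :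
    ∀ x ∈ U,
      (pd 0 A₁ x + pd 1 A₂ x + pd 2 A₃ x = 0) ∧
      (pd 0 (fun y => A₁ y ^ 2) x + pd 1 (fun y => A₁ y * A₂ y) x
        + pd 2 (fun y => A₁ y * A₃ y) x + pd 0 (fun y => QfunInc B₀ pl (p y)) x = 0) ∧
      (pd 0 (fun y => A₁ y * A₂ y) x + pd 1 (fun y => A₂ y ^ 2) x
        + pd 2 (fun y => A₂ y * A₃ y) x + pd 1 (fun y => QfunInc B₀ pl (p y)) x = 0) ∧
      (pd 0 (fun y => A₁ y * A₃ y) x + pd 1 (fun y => A₂ y * A₃ y) x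
        + pd 2 (fun y => A₃ y ^ 2) x + pd 2 (fun y => QfunInc B₀ pl (p y)) x = 0) := by
  intro x hx
  have hUx : U ∈ nhds x := hU.mem_nhds hx
  set d : ℝ := 2 * (B₀ - pl) with hd
  have hdpos : 0 < d := by rw [hd]; linarith
  have hdne : d ≠ 0 := ne_of_gt hdpos
  set c : ℝ := Real.sqrt d with hc
  have hcpos : 0 < c := Real.sqrt_pos.mpr hdpos
  have hcne : c ≠ 0 := ne_of_gt hcpos
  have hc2 : c ^ 2 = d := Real.sq_sqrt hdpos.le
  -- pointwise identification of A_i and Q∘p on U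
  have hkey : ∀ y ∈ U, A₁ y = u 0 y / c ∧ A₂ y = u 1 y / c ∧ A₃ y = u 2 y / c ∧
      QfunInc B₀ pl (p y) = (p y - pl) / d := by
    intro y hy
    have hu0 := hu1pos y hy
    have hu0ne : u 0 y ≠ 0 := ne_of_gt hu0
    have hsq : u 0 y ^ 2 + u 1 y ^ 2 + u 2 y ^ 2 = 2 * (B₀ - p y) := by
      have := hBconst y hy; linarith
    have hpB : p y < B₀ := by nlinarith [sq_nonneg (u 1 y), sq_nonneg (u 2 y)]
    have hGy : G y = 2 * (B₀ - p y) / u 0 y ^ 2 := by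
      rw [hG, hβ₂, hβ₃, ← hsq]; field_simp
    have hsG : Real.sqrt (G y) = Real.sqrt (2 * (B₀ - p y)) / u 0 y := by
      rw [hGy, Real.sqrt_div (by linarith), Real.sqrt_sq hu0.le]
    have hI : IfunInc B₀ pl (p y) = Real.sqrt (B₀ - pl) / Real.sqrt (B₀ - p y) :=
      IfunInc_eq B₀ pl (p y) hpl hpB
    have e1 : Real.sqrt (2 * (B₀ - p y)) = Real.sqrt 2 * Real.sqrt (B₀ - p y) :=
      Real.sqrt_mul (by norm_num) _
    have e2 : c = Real.sqrt 2 * Real.sqrt (B₀ - pl) := by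
      rw [hc, hd]; exact Real.sqrt_mul (by norm_num) _
    have h2pos : (0:ℝ) < Real.sqrt 2 := Real.sqrt_pos.mpr (by norm_num)
    have hplpos : (0:ℝ) < Real.sqrt (B₀ - pl) := Real.sqrt_pos.mpr (by linarith)
    have hpypos : (0:ℝ) < Real.sqrt (B₀ - p y) := Real.sqrt_pos.mpr (by linarith)
    have hA1 : A₁ y = u 0 y / c := by
      rw [hA₁]; simp only
      rw [hsG, hI, e1, e2]
      field_simp
    refine ⟨hA1, ?_, ?_, ?_⟩
    · rw [hA₂]; simp only
      rw [mul_div_assoc, show (Real.sqrt (G y))⁻¹ / IfunInc B₀ pl (p y) = A₁ y from by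
        rw [hA₁], hA1, hβ₂]
      field_simp
    · rw [hA₃]; simp only
      rw [mul_div_assoc, show (Real.sqrt (G y))⁻¹ / IfunInc B₀ pl (p y) = A₁ y from by
        rw [hA₁], hA1, hβ₃]
      field_simp
    · rw [QfunInc_eq B₀ pl (p y) hpl hpB, hd]
  -- differentiability
  have hdu : ∀ i, DifferentiableAt ℝ (u i) x :=
    fun i => ((hu i).contDiffAt hUx).differentiableAt (by simp)
  have hdp : DifferentiableAt ℝ p x := (hp.contDiffAt hUx).differentiableAt (by simp)
  -- eventual equalities
  have hev1 : A₁ =ᶠ[nhds x] fun y => u 0 y / c :=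
    Filter.eventuallyEq_of_mem hUx fun y hy => (hkey y hy).1
  have hev2 : A₂ =ᶠ[nhds x] fun y => u 1 y / c :=
    Filter.eventuallyEq_of_mem hUx fun y hy => (hkey y hy).2.1
  have hev3 : A₃ =ᶠ[nhds x] fun y => u 2 y / c :=
    Filter.eventuallyEq_of_mem hUx fun y hy => (hkey y hy).2.2.1
  have hmulev : ∀ i j : Fin 3, ∀ Ai Aj : (Fin 3 → ℝ) → ℝ,
      (∀ y ∈ U, Ai y = u i y / c) → (∀ y ∈ U, Aj y = u j y / c) →
      (fun y => Ai y * Aj y) =ᶠ[nhds x] fun y => (fun z => u i z * u j z) y / d := by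
    intro i j Ai Aj hi hj
    refine Filter.eventuallyEq_of_mem hUx fun y hy => ?_
    simp only [hi y hy, hj y hy]
    rw [div_mul_div_comm, ← sq, hc2]
  -- pd of products
  have pdmul : ∀ k i j : Fin 3,
      pd k (fun y => (fun z => u i z * u j z) y / d) x
        = (u i x * pd k (u j) x + u j x * pd k (u i) x) / d := by
    intro k i j
    rw [pd_div_const k d ((hdu i).fun_mul (hdu j)), pd_mul k (hdu i) (hdu j)]
  have p1 : ∀ k : Fin 3, pd k A₁ x = pd k (u 0) x / c := fun k => by
    rw [pd_congr hev1, pd_div_const k c (hdu 0)]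
  have p2 : ∀ k : Fin 3, pd k A₂ x = pd k (u 1) x / c := fun k => by
    rw [pd_congr hev2, pd_div_const k c (hdu 1)]
  have p3 : ∀ k : Fin 3, pd k A₃ x = pd k (u 2) x / c := fun k => by
    rw [pd_congr hev3, pd_div_const k c (hdu 2)]
  have q11 : ∀ k : Fin 3, pd k (fun y => A₁ y ^ 2) x
      = (u 0 x * pd k (u 0) x + u 0 x * pd k (u 0) x) / d := fun k => by
    have he : (fun y => A₁ y ^ 2) =ᶠ[nhds x] fun y => (fun z => u 0 z * u 0 z) y / d := by
      have := hmulev 0 0 A₁ A₁ (fun y hy => (hkey y hy).1) (fun y hy => (hkey y hy).1)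
      exact Filter.EventuallyEq.trans (Filter.Eventually.of_forall fun y => pow_two (A₁ y)) this
    rw [pd_congr he, pdmul k 0 0]
  have q22 : ∀ k : Fin 3, pd k (fun y => A₂ y ^ 2) x
      = (u 1 x * pd k (u 1) x + u 1 x * pd k (u 1) x) / d := fun k => by
    have he : (fun y => A₂ y ^ 2) =ᶠ[nhds x] fun y => (fun z => u 1 z * u 1 z) y / d := by
      have := hmulev 1 1 A₂ A₂ (fun y hy => (hkey y hy).2.1) (fun y hy => (hkey y hy).2.1)
      exact Filter.EventuallyEq.trans (Filter.Eventually.of_forall fun y => pow_two (A₂ y)) this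
    rw [pd_congr he, pdmul k 1 1]
  have q33 : ∀ k : Fin 3, pd k (fun y => A₃ y ^ 2) x
      = (u 2 x * pd k (u 2) x + u 2 x * pd k (u 2) x) / d := fun k => by
    have he : (fun y => A₃ y ^ 2) =ᶠ[nhds x] fun y => (fun z => u 2 z * u 2 z) y / d := by
      have := hmulev 2 2 A₃ A₃ (fun y hy => (hkey y hy).2.2.1) (fun y hy => (hkey y hy).2.2.1)
      exact Filter.EventuallyEq.trans (Filter.Eventually.of_forall fun y => pow_two (A₃ y)) this
    rw [pd_congr he, pdmul k 2 2]
  have q12 : ∀ k : Fin 3, pd k (fun y => A₁ y * A₂ y) x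
      = (u 0 x * pd k (u 1) x + u 1 x * pd k (u 0) x) / d := fun k => by
    rw [pd_congr (hmulev 0 1 A₁ A₂ (fun y hy => (hkey y hy).1) (fun y hy => (hkey y hy).2.1)),
      pdmul k 0 1]
  have q13 : ∀ k : Fin 3, pd k (fun y => A₁ y * A₃ y) x
      = (u 0 x * pd k (u 2) x + u 2 x * pd k (u 0) x) / d := fun k => by
    rw [pd_congr (hmulev 0 2 A₁ A₃ (fun y hy => (hkey y hy).1) (fun y hy => (hkey y hy).2.2.1)),
      pdmul k 0 2]
  have q23 : ∀ k : Fin 3, pd k (fun y => A₂ y * A₃ y) x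
      = (u 1 x * pd k (u 2) x + u 2 x * pd k (u 1) x) / d := fun k => by
    rw [pd_congr (hmulev 1 2 A₂ A₃ (fun y hy => (hkey y hy).2.1) (fun y hy => (hkey y hy).2.2.1)),
      pdmul k 1 2]
  have qQ : ∀ k : Fin 3, pd k (fun y => QfunInc B₀ pl (p y)) x = pd k p x / d := fun k => by
    have he : (fun y => QfunInc B₀ pl (p y)) =ᶠ[nhds x] fun y => (fun z => p z - pl) y / d :=
      Filter.eventuallyEq_of_mem hUx fun y hy => (hkey y hy).2.2.2
    rw [pd_congr he, pd_div_const k d (hdp.sub_const pl), pd_sub_const]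
  have hD := hdiv x hx
  have hM0 := hmom 0 x hx
  have hM1 := hmom 1 x hx
  have hM2 := hmom 2 x hx
  refine ⟨?_, ?_, ?_, ?_⟩
  · rw [p1 0, p2 1, p3 2, ← add_div, ← add_div, hD, zero_div]
  · rw [q11 0, q12 1, q13 2, qQ 0]
    field_simp
    linear_combination u 0 x * hD + hM0
  · rw [q12 0, q22 1, q23 2, qQ 1]
    field_simp
    linear_combination u 1 x * hD + hM1
  · rw [q13 0, q23 1, q33 2, qQ 2]
    field_simp
    linear_combination u 2 x * hD + hM2
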